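/- Let a > 0 and assume g(r;a) > 0 for all r ∈ (0,∞). Then the function r ↦ g(r;a)^{1/(p-1)} is integrable on (0,∞), and both g(r;a) = w(r;a)/ρ(r) → 0 and f(r;a) = w'(r;a)/ρ(r) → 0 as r → ∞. -/

import Mathlib

/-!
Since `g > 0` we have `f' < 0`, so `f` decreases, and the equation says exactly `w' = ρ f`.
Everything follows by comparing `w` with multiples of `ρ` (or of `exp`): if `u' ≤ c v'` eventually
and `v → ∞`, then `u ≤ (c + ε) v` eventually, because `u - c v` decreases.
If `f(r) < 0` then `w' ≤ f(r) eˣ` beyond `r`, which drives `w = ρ g > 0` negative; so `f ≥ 0`.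
Since `ρ ≤ ρ' ≤ 2ρ` for large `r`, bounds `c ≤ f ≤ C` give `c/2 - ε ≤ g ≤ C + ε` eventually.
If `f ≥ ε > 0` throughout, `-f' = g^{1/(p-1)}` stays above a positive constant and `f` would
become negative; hence `f → 0`, then `g → 0`, and `-f'` is integrable since `f` has a limit.
-/

open Real Set Filter MeasureTheory Topology

/-- `f` is a solution of the profile equation with parameter `a`:
`f` is C¹ on `[0,∞)` with derivative `f'`, the map `r ↦ |f'(r)|^{p-2} f'(r)` is C¹ on `[0,∞)`
with derivative `F'`, the ODE
`(|f'|^{p-2}f')'(r) + ((N-1)/r)(|f'|^{p-2}f')(r) + f(r) - |f'(r)|^{p-1} = 0` holds for `r > 0`,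
and `f 0 = a`, `f' 0 = 0`. -/
def IsProfileSol (N : ℕ) (p a : ℝ) (f f' F' : ℝ → ℝ) : Prop :=
  (∀ r ∈ Ici (0:ℝ), HasDerivWithinAt f (f' r) (Ici 0) r) ∧
  ContinuousOn f' (Ici 0) ∧
  (∀ r ∈ Ici (0:ℝ), HasDerivWithinAt (fun s => |f' s| ^ (p - 2) * f' s) (F' r) (Ici 0) r) ∧
  ContinuousOn F' (Ici 0) ∧
  (∀ r, 0 < r →
    F' r + (((N : ℝ) - 1) / r) * (|f' r| ^ (p - 2) * f' r) + f r - |f' r| ^ (p - 1) = 0) ∧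
  f 0 = a ∧ f' 0 = 0

/-- `g(r;a) = -|f'(r;a)|^{p-2} f'(r;a)`. -/
noncomputable def gFun (p : ℝ) (f' : ℝ → ℝ) (r : ℝ) : ℝ := -(|f' r| ^ (p - 2) * f' r)

/-- `ρ(r) = r^{N-1} e^r`. -/
noncomputable def rho (N : ℕ) (r : ℝ) : ℝ := r ^ (N - 1) * Real.exp r

/-- the derivative of `ρ`. -/
noncomputable def rho' (N : ℕ) (r : ℝ) : ℝ :=
  (((N : ℝ) - 1) * r ^ (N - 2) + r ^ (N - 1)) * Real.exp r

/-- `w(r;a) = ρ(r) g(r;a)`. -/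
noncomputable def wFun (N : ℕ) (p : ℝ) (f' : ℝ → ℝ) (r : ℝ) : ℝ := rho N r * gFun p f' r

/-- the derivative `w'(r;a) = ρ'(r) g(r;a) + ρ(r) g'(r;a)`, where `g' = -F'`. -/
noncomputable def wDeriv (N : ℕ) (p : ℝ) (f' F' : ℝ → ℝ) (r : ℝ) : ℝ :=
  rho' N r * gFun p f' r - rho N r * F' r

theorem eventually_le_mul_of_deriv_le_mul {u v u' v' : ℝ → ℝ} {c ε : ℝ} (hε : 0 < ε)
    (hu : ∀ᶠ x in atTop, HasDerivAt u (u' x) x) (hv : ∀ᶠ x in atTop, HasDerivAt v (v' x) x)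
    (hle : ∀ᶠ x in atTop, u' x ≤ c * v' x) (hv_top : Tendsto v atTop atTop) :
    ∀ᶠ x in atTop, u x ≤ (c + ε) * v x := by
  obtain ⟨R, hR⟩ := (hu.and (hv.and hle)).exists_forall_of_atTop
  have hderiv : ∀ x ∈ Ici R, HasDerivAt (fun y => u y - c * v y) (u' x - c * v' x) x :=
    fun x hx => (hR x hx).1.sub ((hR x hx).2.1.const_mul c)
  have hanti : AntitoneOn (fun y => u y - c * v y) (Ici R) := by
    refine antitoneOn_of_deriv_nonpos (convex_Ici R)
      (fun x hx => (hderiv x hx).continuousAt.continuousWithinAt)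
      (fun x hx => (hderiv x (interior_subset hx)).differentiableAt.differentiableWithinAt)
      (fun x hx => ?_)
    rw [(hderiv x (interior_subset hx)).deriv]
    linarith [(hR x (interior_subset hx)).2.2]
  filter_upwards [eventually_ge_atTop R, hv_top.eventually_ge_atTop ((u R - c * v R) / ε)]
    with x hxR hvx
  have hK : u R - c * v R ≤ ε * v x := by rwa [div_le_iff₀' hε] at hvx
  linarith [hanti self_mem_Ici hxR hxR]

theorem eventually_mul_le_of_mul_le_deriv {u v u' v' : ℝ → ℝ} {c ε : ℝ} (hε : 0 < ε)
    (hu : ∀ᶠ x in atTop, HasDerivAt u (u' x) x) (hv : ∀ᶠ x in atTop, HasDerivAt v (v' x) x)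
    (hle : ∀ᶠ x in atTop, c * v' x ≤ u' x) (hv_top : Tendsto v atTop atTop) :
    ∀ᶠ x in atTop, (c - ε) * v x ≤ u x := by
  have := eventually_le_mul_of_deriv_le_mul (u := fun x => -u x) (u' := fun x => -u' x)
    (c := -c) hε (hu.mono fun x hx => hx.neg) hv (hle.mono fun x hx => by linarith) hv_top
  filter_upwards [this] with x hx
  linarith

theorem hasDerivAt_rho {N : ℕ} (hN : 1 ≤ N) (r : ℝ) : HasDerivAt (rho N) (rho' N r) r := by
  obtain ⟨n, rfl⟩ := Nat.exists_eq_add_of_le' hN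
  have hrho : rho (n + 1) = fun x => x ^ n * exp x := by
    funext x; simp only [rho, Nat.add_sub_cancel]
  have h : HasDerivAt (fun x => x ^ n * exp x) (n * r ^ (n - 1) * exp r + r ^ n * exp r) r :=
    (hasDerivAt_pow n r).mul (hasDerivAt_exp r)
  rw [hrho]
  convert h using 1
  simp only [rho', Nat.add_sub_cancel, Nat.cast_add, Nat.cast_one, add_sub_cancel_right]
  rw [show n + 1 - 2 = n - 1 by omega]
  ring

theorem rho_pos (N : ℕ) {r : ℝ} (hr : 0 < r) : 0 < rho N r := by
  unfold rho; positivity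

theorem exp_le_rho (N : ℕ) {r : ℝ} (hr : 1 ≤ r) : exp r ≤ rho N r :=
  le_mul_of_one_le_left (exp_pos r).le (one_le_pow₀ hr)

theorem tendsto_rho_atTop (N : ℕ) : Tendsto (rho N) atTop atTop :=
  tendsto_atTop_mono' atTop ((eventually_ge_atTop 1).mono fun _ hr => exp_le_rho N hr)
    tendsto_exp_atTop

theorem rho'_eq {N : ℕ} (hN : 1 ≤ N) {r : ℝ} (hr : 0 < r) :
    rho' N r = (1 + ((N : ℝ) - 1) / r) * rho N r := by
  obtain ⟨n, rfl⟩ := Nat.exists_eq_add_of_le' hN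
  rcases n with _ | n
  · norm_num [rho, rho']
  · simp only [rho, rho', Nat.add_sub_cancel, show n + 1 + 1 - 2 = n by omega]
    push_cast
    field_simp
    ring

theorem rho_le_rho' {N : ℕ} (hN : 1 ≤ N) {r : ℝ} (hr : 0 < r) : rho N r ≤ rho' N r := by
  rw [rho'_eq hN hr]
  have hN' : (0 : ℝ) ≤ ((N : ℝ) - 1) / r :=
    div_nonneg (sub_nonneg.2 (Nat.one_le_cast.2 hN)) hr.le
  exact le_mul_of_one_le_left (rho_pos N hr).le (by linarith)

theorem rho'_le_two_mul_rho {N : ℕ} (hN : 1 ≤ N) {r : ℝ} (hr : 0 < r)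
    (hNr : (N : ℝ) - 1 ≤ r) : rho' N r ≤ 2 * rho N r := by
  rw [rho'_eq hN hr]
  have : ((N : ℝ) - 1) / r ≤ 1 := (div_le_one hr).2 hNr
  exact mul_le_mul_of_nonneg_right (by linarith) (rho_pos N hr).le

section ProfileSolution

variable {N : ℕ} {p a : ℝ} {f f' F' : ℝ → ℝ}

theorem neg_of_gFun_pos {r : ℝ} (h : 0 < gFun p f' r) : f' r < 0 := by
  by_contra! h'
  unfold gFun at h
  nlinarith [rpow_nonneg (abs_nonneg (f' r)) (p - 2)]

theorem gFun_eq_neg_rpow {r : ℝ} (h : f' r < 0) : gFun p f' r = (-f' r) ^ (p - 1) := by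
  rw [gFun, abs_of_neg h, show p - 1 = p - 2 + 1 by ring, rpow_add_one (by linarith)]
  ring

theorem gFun_rpow_inv {r : ℝ} (hp : p ≠ 1) (h : f' r < 0) :
    gFun p f' r ^ (1 / (p - 1)) = -f' r := by
  rw [gFun_eq_neg_rpow h, ← rpow_mul (by linarith), mul_one_div, div_self (sub_ne_zero.2 hp),
    rpow_one]

namespace IsProfileSol

theorem hasDerivAt (hf : IsProfileSol N p a f f' F') {r : ℝ} (hr : 0 < r) :
    HasDerivAt f (f' r) r :=
  (hf.1 r hr.le).hasDerivAt (Ici_mem_nhds hr)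

theorem hasDerivAt_wFun (hf : IsProfileSol N p a f f' F') (hN : 1 ≤ N) {r : ℝ} (hr : 0 < r) :
    HasDerivAt (wFun N p f') (wDeriv N p f' F' r) r := by
  have hg : HasDerivAt (gFun p f') (-F' r) r :=
    ((hf.2.2.1 r hr.le).hasDerivAt (Ici_mem_nhds hr)).neg
  have hw : HasDerivAt (fun x => rho N x * gFun p f' x)
      (rho' N r * gFun p f' r + rho N r * -F' r) r := (hasDerivAt_rho hN r).mul hg
  rw [show wDeriv N p f' F' r = rho' N r * gFun p f' r + rho N r * -F' r by rw [wDeriv]; ring]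
  exact hw

theorem wDeriv_eq_rho_mul (hf : IsProfileSol N p a f f' F') (hN : 1 ≤ N) {r : ℝ} (hr : 0 < r)
    (hneg : f' r < 0) :
    wDeriv N p f' F' r = rho N r * f r := by
  have hode := hf.2.2.2.2.1 r hr
  have hpow : |f' r| ^ (p - 1) = gFun p f' r := by rw [gFun_eq_neg_rpow hneg, abs_of_neg hneg]
  rw [hpow] at hode
  simp only [wDeriv, rho'_eq hN hr, gFun] at hode ⊢
  linear_combination (-rho N r) * hode

theorem antitoneOn (hf : IsProfileSol N p a f f' F') (hg : ∀ r, 0 < r → 0 < gFun p f' r) :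
    AntitoneOn f (Ici 0) := by
  refine antitoneOn_of_deriv_nonpos (convex_Ici 0) (fun x hx => (hf.1 x hx).continuousWithinAt)
    ?_ ?_ <;> rw [interior_Ici]
  · exact fun x hx => (hf.hasDerivAt hx).differentiableAt.differentiableWithinAt
  · intro x hx
    rw [(hf.hasDerivAt hx).deriv]
    exact (neg_of_gFun_pos (hg x hx)).le

theorem eventually_hasDerivAt_wFun (hf : IsProfileSol N p a f f' F') (hN : 1 ≤ N)
    (hg : ∀ r, 0 < r → 0 < gFun p f' r) :
    ∀ᶠ r in atTop, HasDerivAt (wFun N p f') (rho N r * f r) r := by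
  filter_upwards [eventually_gt_atTop 0] with r hr
  rw [← hf.wDeriv_eq_rho_mul hN hr (neg_of_gFun_pos (hg r hr))]
  exact hf.hasDerivAt_wFun hN hr

theorem eventually_gFun_le (hf : IsProfileSol N p a f f' F') (hN : 1 ≤ N)
    (hg : ∀ r, 0 < r → 0 < gFun p f' r) {c ε : ℝ} (hc : 0 ≤ c) (hε : 0 < ε)
    (hfc : ∀ᶠ r in atTop, f r ≤ c) : ∀ᶠ r in atTop, gFun p f' r ≤ c + ε := by
  have hw' : ∀ᶠ r in atTop, rho N r * f r ≤ c * rho' N r := by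
    filter_upwards [hfc, eventually_gt_atTop 0] with r hfr hr
    calc rho N r * f r ≤ rho N r * c := mul_le_mul_of_nonneg_left hfr (rho_pos N hr).le
      _ ≤ c * rho' N r := by rw [mul_comm]; exact mul_le_mul_of_nonneg_left (rho_le_rho' hN hr) hc
  filter_upwards [eventually_le_mul_of_deriv_le_mul hε (hf.eventually_hasDerivAt_wFun hN hg)
    (.of_forall (hasDerivAt_rho hN)) hw' (tendsto_rho_atTop N), eventually_gt_atTop 0]
    with r hw hr
  rw [wFun, mul_comm (c + ε)] at hw
  exact le_of_mul_le_mul_left hw (rho_pos N hr)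

theorem eventually_le_gFun (hf : IsProfileSol N p a f f' F') (hN : 1 ≤ N)
    (hg : ∀ r, 0 < r → 0 < gFun p f' r) {c ε : ℝ} (hc : 0 ≤ c) (hε : 0 < ε)
    (hfc : ∀ᶠ r in atTop, c ≤ f r) : ∀ᶠ r in atTop, c / 2 - ε ≤ gFun p f' r := by
  have hw' : ∀ᶠ r in atTop, c / 2 * rho' N r ≤ rho N r * f r := by
    filter_upwards [hfc, eventually_gt_atTop 0, eventually_ge_atTop ((N : ℝ) - 1)]
      with r hfr hr hNr
    calc c / 2 * rho' N r ≤ c / 2 * (2 * rho N r) :=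
          mul_le_mul_of_nonneg_left (rho'_le_two_mul_rho hN hr hNr) (by positivity)
      _ = rho N r * c := by ring
      _ ≤ rho N r * f r := mul_le_mul_of_nonneg_left hfr (rho_pos N hr).le
  filter_upwards [eventually_mul_le_of_mul_le_deriv hε (hf.eventually_hasDerivAt_wFun hN hg)
    (.of_forall (hasDerivAt_rho hN)) hw' (tendsto_rho_atTop N), eventually_gt_atTop 0]
    with r hw hr
  rw [wFun, mul_comm (c / 2 - ε)] at hw
  exact le_of_mul_le_mul_left hw (rho_pos N hr)

theorem nonneg (hf : IsProfileSol N p a f f' F') (hN : 1 ≤ N)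
    (hg : ∀ r, 0 < r → 0 < gFun p f' r) {r : ℝ} (hr : 0 ≤ r) : 0 ≤ f r := by
  by_contra! hfr
  have hw' : ∀ᶠ x in atTop, rho N x * f x ≤ f r * exp x := by
    filter_upwards [eventually_ge_atTop r, eventually_ge_atTop 1] with x hrx hx
    calc rho N x * f x ≤ rho N x * f r :=
          mul_le_mul_of_nonneg_left (hf.antitoneOn hg hr (hr.trans hrx) hrx)
            (rho_pos N (by linarith)).le
      _ ≤ exp x * f r := mul_le_mul_of_nonpos_right (exp_le_rho N hx) hfr.le
      _ = f r * exp x := mul_comm _ _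
  obtain ⟨x, hw, hx⟩ := ((eventually_le_mul_of_deriv_le_mul (by linarith : 0 < -f r / 2)
    (hf.eventually_hasDerivAt_wFun hN hg) (.of_forall hasDerivAt_exp) hw' tendsto_exp_atTop).and
    (eventually_gt_atTop 0)).exists
  have hwx : 0 < wFun N p f' x := mul_pos (rho_pos N hx) (hg x hx)
  nlinarith [exp_pos x]

theorem tendsto_atTop_zero (hf : IsProfileSol N p a f f' F') (hN : 1 ≤ N) (hp : 1 < p)
    (hg : ∀ r, 0 < r → 0 < gFun p f' r) : Tendsto f atTop (𝓝 0) := by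
  refine tendsto_order.2 ⟨fun b hb => (eventually_ge_atTop 0).mono fun x hx =>
    hb.trans_le (hf.nonneg hN hg hx), fun ε hε => ?_⟩
  by_contra hnot
  have hfε : ∀ᶠ x in atTop, ε ≤ f x := by
    filter_upwards [eventually_ge_atTop 0] with x hx
    by_contra! hx'
    exact hnot (eventually_atTop.2
      ⟨x, fun y hy => (hf.antitoneOn hg hx (hx.trans hy) hy).trans_lt hx'⟩)
  set δ := (ε / 4) ^ (1 / (p - 1))
  have hδpos : 0 < δ := rpow_pos_of_pos (by positivity) _
  have hf' : ∀ᶠ x in atTop, f' x ≤ -δ * 1 := by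
    filter_upwards [hf.eventually_le_gFun hN hg hε.le (by positivity : 0 < ε / 4) hfε,
      eventually_gt_atTop 0] with x hgx hx
    have := rpow_le_rpow (by positivity) (by linarith : ε / 4 ≤ gFun p f' x)
      (one_div_pos.2 (sub_pos.2 hp)).le
    rw [gFun_rpow_inv hp.ne' (neg_of_gFun_pos (hg x hx))] at this
    linarith
  obtain ⟨x, hfx, hx⟩ := ((eventually_le_mul_of_deriv_le_mul (half_pos hδpos)
    ((eventually_gt_atTop 0).mono fun x hx => hf.hasDerivAt hx) (.of_forall hasDerivAt_id)
    hf' tendsto_id).and (eventually_gt_atTop 0)).exists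
  rw [id] at hfx
  nlinarith [hf.nonneg hN hg hx.le]

theorem tendsto_gFun_atTop_zero (hf : IsProfileSol N p a f f' F') (hN : 1 ≤ N)
    (hg : ∀ r, 0 < r → 0 < gFun p f' r) (hf0 : Tendsto f atTop (𝓝 0)) :
    Tendsto (gFun p f') atTop (𝓝 0) := by
  refine tendsto_order.2 ⟨fun b hb => (eventually_gt_atTop 0).mono fun x hx =>
    hb.trans (hg x hx), fun ε hε => ?_⟩
  filter_upwards [hf.eventually_gFun_le hN hg (half_pos hε).le (by positivity : 0 < ε / 4)
    ((hf0.eventually_lt_const (half_pos hε)).mono fun _ => le_of_lt)] with x hx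
  linarith

end IsProfileSol

end ProfileSolution

theorem stmt9_general (N : ℕ) (hN : 2 ≤ N) (p : ℝ)
    (hp1 : 2 * (N : ℝ) / ((N : ℝ) + 1) < p)
    (a : ℝ)
    (f f' F' : ℝ → ℝ) (hf : IsProfileSol N p a f f' F')
    (hg : ∀ r, 0 < r → 0 < gFun p f' r) :
    MeasureTheory.IntegrableOn (fun r => gFun p f' r ^ (1 / (p - 1))) (Set.Ioi (0:ℝ)) ∧
    Filter.Tendsto (gFun p f') Filter.atTop (nhds 0) ∧
    Filter.Tendsto f Filter.atTop (nhds 0) := by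
  have hN1 : 1 ≤ N := by omega
  have hp : 1 < p := by
    refine lt_of_le_of_lt ?_ hp1
    rw [le_div_iff₀ (by positivity)]
    linarith [(Nat.one_le_cast (α := ℝ)).2 hN1]
  have hf0 := hf.tendsto_atTop_zero hN1 hp hg
  refine ⟨?_, hf.tendsto_gFun_atTop_zero hN1 hg hf0, hf0⟩
  have hint : IntegrableOn (fun r => -f' r) (Ioi 0) :=
    (integrableOn_Ioi_deriv_of_nonpos (hf.1 0 self_mem_Ici).continuousWithinAt
      (fun x hx => hf.hasDerivAt hx) (fun x hx => (neg_of_gFun_pos (hg x hx)).le) hf0).neg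
  exact hint.congr_fun (fun r hr => (gFun_rpow_inv hp.ne' (neg_of_gFun_pos (hg r hr))).symm)
    measurableSet_Ioi

/-- if `g(·;a) > 0` on `(0,∞)`, then `g^{1/(p-1)}` is integrable on `(0,∞)`
and both `g(r;a) = w(r;a)/ρ(r) → 0` and `f(r;a) = w'(r;a)/ρ(r) → 0` as `r → ∞`. -/
theorem stmt9 (N : ℕ) (hN : 2 ≤ N) (p : ℝ)
    (hp1 : 2 * (N : ℝ) / ((N : ℝ) + 1) < p) (hp2 : p < 2)
    (a : ℝ) (ha : 0 < a)
    (f f' F' : ℝ → ℝ) (hf : IsProfileSol N p a f f' F')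
    (hg : ∀ r, 0 < r → 0 < gFun p f' r) :
    MeasureTheory.IntegrableOn (fun r => gFun p f' r ^ (1 / (p - 1))) (Set.Ioi (0:ℝ)) ∧
    Filter.Tendsto (gFun p f') Filter.atTop (nhds 0) ∧
    Filter.Tendsto f Filter.atTop (nhds 0) :=
  stmt9_general N hN p hp1 a f f' F' hf hg
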